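/- arXiv:1801.00771 — 3 statements merged into one kernel-verified Lean document; each statement's English description precedes it below -/
import Mathlib

section
/- Let p be an odd prime. The formal power series c = ∑_{i≥0} ((-1)^i/(2i+1)!!)·t^{2i+1} over ℚ_p has p-adic radius of convergence exactly ω^{1/2}, where ω = p^{-1/(p-1)}. -/
/-!
By Legendre's formula, `(p - 1) v_p((2i+1)‼) = i + 1 + s_p(i) - s_p(2i+1)`, where `s_p` is the
base-`p` digit sum. Since `p ^ s_p(n) ≤ (p n) ^ (p - 1)`, the `(p - 1)`-th power of
`|a_i|_p ρ^(2i+1) = p ^ v_p((2i+1)‼) ρ^(2i+1)` agrees with `(p ρ^(2(p-1)))^i` up to factors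
polynomial in `i`. Hence the terms tend to `0` when `p ρ^(2(p-1)) < 1`, i.e. `ρ < ω^(1/2)`, and
do not when `p ρ^(2(p-1)) > 1`.
-/

open Filter Finset Nat Topology

theorem Nat.prod_range_odd_eq_doubleFactorial (n : ℕ) :
    ∏ j ∈ range (n + 1), (2 * j + 1) = (2 * n + 1)‼ := by
  rw [doubleFactorial_eq_prod_odd, prod_range_succ']
  simp

theorem Nat.factorial_two_mul_add_one (n : ℕ) : (2 * n + 1)! = (2 * n + 1)‼ * (2 ^ n * n !) := by
  rw [factorial_eq_mul_doubleFactorial, doubleFactorial_two_mul]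

theorem Nat.digits_sum_le_mul_log_add_one {b : ℕ} (hb : 1 < b) (n : ℕ) :
    (b.digits n).sum ≤ (b - 1) * (Nat.log b n + 1) := by
  rcases eq_or_ne n 0 with rfl | hn
  · simp
  calc (b.digits n).sum ≤ (b.digits n).length • (b - 1) :=
        List.sum_le_card_nsmul _ _ fun d hd => Nat.le_sub_one_of_lt (digits_lt_base hb hd)
    _ = (b - 1) * (Nat.log b n + 1) := by rw [length_digits b n hb hn, smul_eq_mul, mul_comm]

theorem Nat.pow_digits_sum_le {b n : ℕ} (hb : 1 < b) (hn : n ≠ 0) :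
    b ^ (b.digits n).sum ≤ (b * n) ^ (b - 1) := by
  calc b ^ (b.digits n).sum ≤ b ^ ((b - 1) * (Nat.log b n + 1)) :=
        Nat.pow_le_pow_right (by omega) (digits_sum_le_mul_log_add_one hb n)
    _ = (b ^ Nat.log b n * b) ^ (b - 1) := by rw [mul_comm, pow_mul, pow_succ]
    _ ≤ (b * n) ^ (b - 1) := by
        rw [mul_comm (b ^ _)]
        gcongr
        exact pow_log_le_self b hn

theorem sub_one_mul_padicValNat_doubleFactorial_add_digits_sum {p : ℕ} [hp : Fact p.Prime]
    (hp2 : p ≠ 2) (n : ℕ) :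
    (p - 1) * padicValNat p (2 * n + 1)‼ + (p.digits (2 * n + 1)).sum =
      n + 1 + (p.digits n).sum := by
  have hodd : ¬ p ∣ 2 ^ n := fun h =>
    hp2 ((Nat.prime_dvd_prime_iff_eq hp.out prime_two).mp (hp.out.dvd_of_dvd_pow h))
  have hval : padicValNat p (2 * n + 1)! = padicValNat p (2 * n + 1)‼ + padicValNat p n ! := by
    rw [factorial_two_mul_add_one, padicValNat.mul (doubleFactorial_pos _).ne'
      (by positivity), padicValNat.mul (by positivity) (factorial_ne_zero n),
      padicValNat.eq_zero_of_not_dvd hodd, zero_add]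
  have hlegendre := sub_one_mul_padicValNat_factorial (p := p) (2 * n + 1)
  have hlegendre' := sub_one_mul_padicValNat_factorial (p := p) n
  have := digit_sum_le p (2 * n + 1)
  have := digit_sum_le p n
  rw [hval, mul_add] at hlegendre
  omega

theorem padicNorm_neg_one_pow_div_natCast {p : ℕ} [Fact p.Prime] (i : ℕ) {n : ℕ} (hn : n ≠ 0) :
    padicNorm p ((-1) ^ i / n) = (p : ℚ) ^ padicValNat p n := by
  have hn' : (n : ℚ) ≠ 0 := by exact_mod_cast hn
  rw [padicNorm.div, padicNorm.eq_zpow_of_nonzero hn', padicValRat.of_nat]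
  rcases neg_one_pow_eq_or ℚ i with h | h <;> simp [h]

section CoefficientBounds

variable {p : ℕ} [hp : Fact p.Prime]

theorem coeff_term_pow_mul_pow_digits_sum (hp2 : p ≠ 2) (ρ : ℝ) (i : ℕ) :
    ((p : ℝ) ^ padicValNat p (2 * i + 1)‼ * ρ ^ (2 * i + 1)) ^ (p - 1) *
        (p : ℝ) ^ (p.digits (2 * i + 1)).sum =
      (p * ρ ^ (2 * (p - 1))) ^ i * (p * ρ ^ (p - 1)) * (p : ℝ) ^ (p.digits i).sum := by
  have key := congrArg (fun n : ℕ => (p : ℝ) ^ n)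
    (sub_one_mul_padicValNat_doubleFactorial_add_digits_sum hp2 i)
  simp only [pow_add] at key
  calc _ = (p : ℝ) ^ ((p - 1) * padicValNat p (2 * i + 1)‼) *
        (p : ℝ) ^ (p.digits (2 * i + 1)).sum * ρ ^ ((2 * i + 1) * (p - 1)) := by ring
    _ = _ := by rw [key]; ring

theorem coeff_term_pow_le (hp2 : p ≠ 2) {ρ : ℝ} (hρ : 0 ≤ ρ) {i : ℕ} (hi : i ≠ 0) :
    ((p : ℝ) ^ padicValNat p (2 * i + 1)‼ * ρ ^ (2 * i + 1)) ^ (p - 1) ≤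
      p * ρ ^ (p - 1) * p ^ (p - 1) * (i : ℝ) ^ (p - 1) * (p * ρ ^ (2 * (p - 1))) ^ i := by
  have hp1 : (1 : ℝ) ≤ p := by exact_mod_cast hp.out.one_le
  have hdigits : ((p : ℝ)) ^ (p.digits i).sum ≤ (p * i : ℝ) ^ (p - 1) := by
    exact_mod_cast pow_digits_sum_le hp.out.one_lt hi
  calc _ ≤ ((p : ℝ) ^ padicValNat p (2 * i + 1)‼ * ρ ^ (2 * i + 1)) ^ (p - 1) *
        (p : ℝ) ^ (p.digits (2 * i + 1)).sum :=
        le_mul_of_one_le_right (by positivity) (one_le_pow₀ hp1)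
    _ = (p * ρ ^ (2 * (p - 1))) ^ i * (p * ρ ^ (p - 1)) * (p : ℝ) ^ (p.digits i).sum :=
        coeff_term_pow_mul_pow_digits_sum hp2 ρ i
    _ ≤ (p * ρ ^ (2 * (p - 1))) ^ i * (p * ρ ^ (p - 1)) * (p * i : ℝ) ^ (p - 1) := by
        gcongr
    _ = _ := by ring

theorem le_coeff_term_pow (hp2 : p ≠ 2) {ρ : ℝ} (hρ : 0 ≤ ρ) {i : ℕ} (hi : i ≠ 0) :
    p * ρ ^ (p - 1) / (3 * p) ^ (p - 1) * (p * ρ ^ (2 * (p - 1))) ^ i ≤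
      ((p : ℝ) ^ padicValNat p (2 * i + 1)‼ * ρ ^ (2 * i + 1)) ^ (p - 1) * (i : ℝ) ^ (p - 1) := by
  have hp1 : (1 : ℝ) ≤ p := by exact_mod_cast hp.out.one_le
  have hdigits : ((p : ℝ)) ^ (p.digits (2 * i + 1)).sum ≤ (3 * p * i : ℝ) ^ (p - 1) := by
    calc ((p : ℝ)) ^ (p.digits (2 * i + 1)).sum ≤ (p * (2 * i + 1 : ℕ) : ℝ) ^ (p - 1) := by
          exact_mod_cast pow_digits_sum_le hp.out.one_lt (by omega)
      _ ≤ (3 * p * i : ℝ) ^ (p - 1) := by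
          have : (1 : ℝ) ≤ i := by exact_mod_cast Nat.one_le_iff_ne_zero.mpr hi
          gcongr ?_ ^ _
          push_cast
          nlinarith
  rw [div_mul_eq_mul_div, div_le_iff₀ (by positivity)]
  calc _ ≤ (p * ρ ^ (2 * (p - 1))) ^ i * (p * ρ ^ (p - 1)) * (p : ℝ) ^ (p.digits i).sum := by
        rw [mul_comm _ ((p : ℝ) * _)]
        exact le_mul_of_one_le_right (by positivity) (one_le_pow₀ hp1)
    _ = ((p : ℝ) ^ padicValNat p (2 * i + 1)‼ * ρ ^ (2 * i + 1)) ^ (p - 1) *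
        (p : ℝ) ^ (p.digits (2 * i + 1)).sum := (coeff_term_pow_mul_pow_digits_sum hp2 ρ i).symm
    _ ≤ ((p : ℝ) ^ padicValNat p (2 * i + 1)‼ * ρ ^ (2 * i + 1)) ^ (p - 1) *
        (3 * p * i : ℝ) ^ (p - 1) := by gcongr
    _ = _ := by ring

end CoefficientBounds

theorem tendsto_zero_of_pow_le_mul_geometric {q : ℕ → ℝ} (hq : ∀ i, 0 ≤ q i) {k m : ℕ}
    (hk : k ≠ 0) {C R : ℝ} (hR₀ : 0 ≤ R) (hR₁ : R < 1)
    (hle : ∀ᶠ i in atTop, q i ^ k ≤ C * (i : ℝ) ^ m * R ^ i) : Tendsto q atTop (𝓝 0) := by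
  have hgeom : Tendsto (fun i : ℕ => C * (i : ℝ) ^ m * R ^ i) atTop (𝓝 0) := by
    simpa [mul_assoc] using
      (tendsto_pow_const_mul_const_pow_of_abs_lt_one m (abs_lt.mpr ⟨by linarith, hR₁⟩)).const_mul C
  have hpow : Tendsto (fun i => q i ^ k) atTop (𝓝 0) :=
    squeeze_zero' (.of_forall fun i => pow_nonneg (hq i) k) hle hgeom
  simpa [Real.pow_rpow_inv_natCast (hq _) hk, Real.zero_rpow (inv_ne_zero (Nat.cast_ne_zero.mpr hk))]
    using hpow.rpow_const (p := (k : ℝ)⁻¹) (Or.inr (by positivity))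

theorem not_tendsto_zero_of_geometric_le_pow_mul {q : ℕ → ℝ} {k m : ℕ} {C R : ℝ} (hC : 0 < C)
    (hR : 1 < R) (hle : ∀ᶠ i in atTop, C * R ^ i ≤ q i ^ k * (i : ℝ) ^ m) :
    ¬ Tendsto q atTop (𝓝 0) := by
  intro hq
  have hlim : Tendsto (fun i => q i ^ k * ((i : ℝ) ^ m / R ^ i)) atTop (𝓝 0) := by
    simpa using (hq.pow k).mul (tendsto_pow_const_div_const_pow_of_one_lt m hR)
  have hev : ∀ᶠ i in atTop, C ≤ q i ^ k * ((i : ℝ) ^ m / R ^ i) := by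
    filter_upwards [hle] with i hi
    rwa [mul_div_assoc', le_div_iff₀ (pow_pos (by linarith) i)]
  exact hC.not_ge (ge_of_tendsto hlim hev)

theorem rpow_neg_inv_sub_one_rpow_half_pow {p : ℕ} (hp : 1 < p) :
    (((p : ℝ) ^ (-(1 : ℝ) / (p - 1))) ^ ((1 : ℝ) / 2)) ^ (2 * (p - 1)) = (p : ℝ)⁻¹ := by
  have hp' : (1 : ℝ) < p := by exact_mod_cast hp
  rw [← Real.rpow_natCast, ← Real.rpow_mul (by positivity), ← Real.rpow_mul (by positivity),
    Nat.cast_mul, Nat.cast_sub hp.le]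
  push_cast
  rw [show -1 / ((p : ℝ) - 1) * (1 / 2 * (2 * ((p : ℝ) - 1))) = -1 by field_simp [sub_ne_zero.mpr hp'.ne'],
    Real.rpow_neg_one]

/-- For an odd prime `p`, the power series
`c = ∑ ((-1)^i/(2i+1)!!) t^(2i+1)` over `ℚ_p`, where `(2i+1)!! = ∏_{j=0}^{i} (2j+1)`,
has radius of convergence exactly `ω^(1/2)` where `ω = p^(-1/(p-1))`. -/
theorem radius_of_c_series (p : ℕ) (hp : p.Prime) (hp2 : p ≠ 2) :
    let ω : ℝ := (p : ℝ) ^ (-(1 : ℝ) / (p - 1))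
    let a : ℕ → ℚ := fun i => (-1) ^ i / (∏ j ∈ Finset.range (i + 1), (2 * j + 1) : ℕ)
    (∀ ρ : ℝ, 0 ≤ ρ → ρ < ω ^ ((1 : ℝ) / 2) →
      Tendsto (fun i : ℕ => (padicNorm p (a i) : ℝ) * ρ ^ (2 * i + 1)) atTop (nhds 0)) ∧
    (∀ ρ : ℝ, ω ^ ((1 : ℝ) / 2) < ρ →
      ¬ Tendsto (fun i : ℕ => (padicNorm p (a i) : ℝ) * ρ ^ (2 * i + 1)) atTop (nhds 0)) := by
  intro ω a
  have : Fact p.Prime := ⟨hp⟩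
  have hnorm (i : ℕ) : (padicNorm p (a i) : ℝ) = (p : ℝ) ^ padicValNat p (2 * i + 1)‼ := by
    simp only [a, prod_range_odd_eq_doubleFactorial,
      padicNorm_neg_one_pow_div_natCast i (doubleFactorial_pos _).ne', Rat.cast_pow,
      Rat.cast_natCast]
  have hω : p * (ω ^ ((1 : ℝ) / 2)) ^ (2 * (p - 1)) = 1 := by
    rw [rpow_neg_inv_sub_one_rpow_half_pow hp.one_lt, mul_inv_cancel₀ (by exact_mod_cast hp.ne_zero)]
  have hp0 : (0 : ℝ) < p := by exact_mod_cast hp.pos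
  have hexp : p - 1 ≠ 0 := by have := hp.two_le; omega
  have hexp₂ : 2 * (p - 1) ≠ 0 := by omega
  simp only [hnorm]
  refine ⟨fun ρ hρ hρω => ?_, fun ρ hωρ => ?_⟩
  · have hR : p * ρ ^ (2 * (p - 1)) < 1 := by
      rw [← hω]; gcongr
    exact tendsto_zero_of_pow_le_mul_geometric (fun i => by positivity)
      hexp (by positivity) hR
      ((eventually_ne_atTop 0).mono fun i hi => coeff_term_pow_le hp2 hρ hi)
  · have hρ : 0 < ρ := lt_of_le_of_lt (by positivity) hωρ
    have hR : 1 < p * ρ ^ (2 * (p - 1)) := by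
      rw [← hω]; gcongr
    exact not_tendsto_zero_of_geometric_le_pow_mul (by positivity) hR
      ((eventually_ne_atTop 0).mono fun i hi => le_coeff_term_pow hp2 hρ.le hi)
end

section
/- Let p ≠ 2 and K a complete discretely valued field of mixed characteristic (0,p). Let M be the differential module over K[[t]]₀ with basis e₁,e₂, D(e₁) = e₂, D(e₂) = -e₁ - t·e₂. Then the space of horizontal sections of M ⊗ K{t} (power series converging on the open unit disc) equals K·(t·e₁ + e₂); in particular it is one-dimensional and every horizontal section over K{t} is already defined over K[[t]]₀. -/
open PowerSeries Filter

/-!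
A horizontal section `g e₁ + h e₂` has `h = g'`, and `g` solves the Hermite equation
`g'' - t g' + g = 0`, i.e. its coefficients satisfy `(n+1)(n+2) a_{n+2} = (n-1) a_n`.
The factor `n - 1` kills the odd coefficients beyond `a₁`. For the even ones,
`a₀ = -2^k (2k-1) k! a_{2k}`, and `|(pm)!| ≤ p^{-m}` forces `|a_{2pm}| ≥ p^m |a₀|`;
with `η^{2p} = 1/p` this keeps `|a_{2pm}| η^{2pm} ≥ |a₀|`, so convergence on the open unit
disc forces `a₀ = 0`.
-/

open Topology

section PadicNorm

variable {p : ℕ} [Fact p.Prime] {K : Type*} [NormedField K]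

lemma norm_intCast_le_one_of_norm_eq_padicNorm
    (hK : ∀ q : ℚ, ‖(q : K)‖ = (padicNorm p q : ℝ)) (z : ℤ) : ‖(z : K)‖ ≤ 1 := by
  have := hK z
  rw [Rat.cast_intCast] at this
  rw [this]
  exact_mod_cast padicNorm.of_int z

lemma norm_natCast_le_of_pow_dvd
    (hK : ∀ q : ℚ, ‖(q : K)‖ = (padicNorm p q : ℝ)) {m n : ℕ} (h : p ^ m ∣ n) :
    ‖(n : K)‖ ≤ (p : ℝ)⁻¹ ^ m := by
  have hn := padicNorm.dvd_iff_norm_le.mp (Int.natCast_dvd_natCast.mpr h)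
  have := hK n
  rw [Rat.cast_natCast] at this
  rw [this, inv_pow, ← zpow_natCast, ← zpow_neg]
  have := (Rat.cast_le (K := ℝ)).mpr hn
  push_cast at this
  exact this

lemma charZero_of_norm_eq_padicNorm
    (hK : ∀ q : ℚ, ‖(q : K)‖ = (padicNorm p q : ℝ)) : CharZero K := by
  refine charZero_of_inj_zero fun n hn => ?_
  have := hK n
  rw [Rat.cast_natCast, hn, norm_zero, eq_comm, Rat.cast_eq_zero] at this
  exact_mod_cast padicNorm.zero_of_padicNorm_eq_zero this

lemma pow_dvd_factorial_mul (m : ℕ) : p ^ m ∣ (p * m).factorial :=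
  (pow_dvd_pow p (by rw [padicValNat_factorial_mul]; omega)).trans pow_padicValNat_dvd

end PadicNorm

section Recurrence

variable {R : Type*} [CommRing R] {a : ℕ → R}

/-- The coefficient recurrence of the Hermite equation `y'' - t y' + y = 0`. -/
def HermiteRecurrence (a : ℕ → R) : Prop :=
  ∀ n : ℕ, ((n : R) + 1) * ((n : R) + 2) * a (n + 2) = ((n : R) - 1) * a n

lemma hermiteRecurrence_coeff {g : R⟦X⟧}
    (hg : d⁄dX R (d⁄dX R g) - X * d⁄dX R g + g = 0) :
    HermiteRecurrence fun n => coeff n g := by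
  intro n
  have hn := congrArg (coeff n) hg
  rcases n with _ | n
  · simp only [map_add, map_sub, coeff_derivative, coeff_zero_X_mul, map_zero] at hn
    push_cast at hn ⊢
    linear_combination hn
  · simp only [map_add, map_sub, coeff_derivative, coeff_succ_X_mul, map_zero] at hn
    push_cast at hn ⊢
    linear_combination hn

lemma HermiteRecurrence.apply_zero_eq (hrec : HermiteRecurrence a) (k : ℕ) :
    a 0 = -(((2 ^ k * (2 * k - 1) : ℤ) : R) * k.factorial) * a (2 * k) := by
  induction k with
  | zero => simp
  | succ k ih =>
    have hr := hrec (2 * k)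
    rw [ih, show 2 * (k + 1) = 2 * k + 2 by ring]
    push_cast [Nat.factorial_succ] at hr ⊢
    linear_combination (2 : R) ^ k * (k.factorial : R) * hr

lemma HermiteRecurrence.apply_add_two_mul_eq_zero [IsDomain R] [CharZero R]
    (hrec : HermiteRecurrence a) {m : ℕ} (hm : a m = 0) (j : ℕ) : a (m + 2 * j) = 0 := by
  induction j with
  | zero => simpa using hm
  | succ j ih =>
    have hr := hrec (m + 2 * j)
    rw [ih, mul_zero] at hr
    have h1 : ((m + 2 * j : ℕ) : R) + 1 ≠ 0 := by norm_cast
    have h2 : ((m + 2 * j : ℕ) : R) + 2 ≠ 0 := by norm_cast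
    rw [show m + 2 * (j + 1) = m + 2 * j + 2 by ring]
    exact (mul_eq_zero.mp hr).resolve_left (mul_ne_zero h1 h2)

lemma eq_C_mul_X_of_hermite [IsDomain R] [CharZero R] {g : R⟦X⟧}
    (hg : d⁄dX R (d⁄dX R g) - X * d⁄dX R g + g = 0) (h0 : coeff 0 g = 0) :
    g = C (coeff 1 g) * X := by
  have hrec := hermiteRecurrence_coeff hg
  have h3 : coeff 3 g = 0 := by
    have h := hrec 1
    norm_num at h
    exact h
  ext n
  rw [← pow_one X, coeff_C_mul_X_pow]
  split_ifs with hn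
  · rw [hn]
  obtain ⟨j, rfl | rfl⟩ := Nat.even_or_odd' n
  · simpa using hrec.apply_add_two_mul_eq_zero h0 j
  · obtain ⟨i, rfl⟩ : ∃ i, j = i + 1 := Nat.exists_eq_add_one.mpr (by omega)
    simpa [show 2 * (i + 1) + 1 = 3 + 2 * i by ring] using hrec.apply_add_two_mul_eq_zero h3 i

end Recurrence

section Convergence

variable {p : ℕ} [Fact p.Prime] {K : Type*} [NormedField K] {a : ℕ → K}

lemma HermiteRecurrence.norm_apply_zero_le (hrec : HermiteRecurrence a)
    (hK : ∀ q : ℚ, ‖(q : K)‖ = (padicNorm p q : ℝ)) (k : ℕ) :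
    ‖a 0‖ ≤ ‖(k.factorial : K)‖ * ‖a (2 * k)‖ := by
  rw [hrec.apply_zero_eq k, norm_mul, norm_neg, norm_mul]
  exact mul_le_mul_of_nonneg_right
    (mul_le_of_le_one_left (norm_nonneg _) (norm_intCast_le_one_of_norm_eq_padicNorm hK _))
    (norm_nonneg _)

lemma HermiteRecurrence.apply_zero_eq_zero_of_tendsto (hrec : HermiteRecurrence a)
    (hK : ∀ q : ℚ, ‖(q : K)‖ = (padicNorm p q : ℝ))
    (hconv : ∀ η : ℝ, 0 ≤ η → η < 1 →
      Tendsto (fun i : ℕ => ‖a i‖ * η ^ i) atTop (𝓝 0)) :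
    a 0 = 0 := by
  have hp0 : 0 < p := (Fact.out : p.Prime).pos
  have hp : (1 : ℝ) < p := by exact_mod_cast (Fact.out : p.Prime).one_lt
  set η : ℝ := (p : ℝ)⁻¹ ^ ((2 * p : ℕ) : ℝ)⁻¹
  have hη0 : 0 ≤ η := by positivity
  have hη1 : η < 1 :=
    Real.rpow_lt_one (by positivity) (inv_lt_one_of_one_lt₀ hp) (by positivity)
  have hηpow : η ^ (2 * p) = (p : ℝ)⁻¹ :=
    Real.rpow_inv_natCast_pow (by positivity) (by positivity)
  have hsub : Tendsto (fun m : ℕ => ‖a (2 * p * m)‖ * η ^ (2 * p * m)) atTop (𝓝 0) :=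
    (hconv η hη0 hη1).comp (tendsto_id.const_mul_atTop' (by positivity))
  refine norm_le_zero_iff.mp (ge_of_tendsto' hsub fun m => ?_)
  calc ‖a 0‖ ≤ ‖((p * m).factorial : K)‖ * ‖a (2 * p * m)‖ := by
        simpa [mul_assoc] using hrec.norm_apply_zero_le hK (p * m)
    _ ≤ (p : ℝ)⁻¹ ^ m * ‖a (2 * p * m)‖ := by
        gcongr
        exact norm_natCast_le_of_pow_dvd hK (pow_dvd_factorial_mul m)
    _ = ‖a (2 * p * m)‖ * η ^ (2 * p * m) := by rw [pow_mul, hηpow, mul_comm]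

end Convergence

-- Coordinates: `D(g e₁ + h e₂) = (g' - h) e₁ + (g + h' - t h) e₂`.
theorem horizontal_sections_of_M_general (p : ℕ) (hp : p.Prime)
    (K : Type*) [NormedField K]
    (hK : ∀ q : ℚ, ‖(q : K)‖ = (padicNorm p q : ℝ)) :
    let Conv : PowerSeries K → Prop := fun f => ∀ η : ℝ, 0 ≤ η → η < 1 →
      Tendsto (fun i : ℕ => ‖PowerSeries.coeff (R := K) i f‖ * η ^ i) atTop (nhds 0)
    ∀ g h : PowerSeries K, Conv g → Conv h →
      ((PowerSeries.derivative K g - h = 0 ∧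
        g + PowerSeries.derivative K h - PowerSeries.X * h = 0) ↔
      ∃ d : K, g = PowerSeries.C (R := K) d * PowerSeries.X ∧ h = PowerSeries.C (R := K) d) := by
  intro Conv g h hg _
  have : Fact p.Prime := ⟨hp⟩
  have : CharZero K := charZero_of_norm_eq_padicNorm hK
  constructor
  · rintro ⟨hgh, hode⟩
    obtain rfl : d⁄dX K g = h := sub_eq_zero.mp hgh
    have hermite : d⁄dX K (d⁄dX K g) - X * d⁄dX K g + g = 0 := by rw [← hode]; ring
    have hg0 : coeff 0 g = 0 :=
      (hermiteRecurrence_coeff hermite).apply_zero_eq_zero_of_tendsto hK hg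
    have hgX := eq_C_mul_X_of_hermite hermite hg0
    exact ⟨coeff 1 g, hgX, by rw [hgX]; simp⟩
  · rintro ⟨d, rfl, rfl⟩
    constructor <;> simp [mul_comm]

/-- Let `p ≠ 2` be prime and `K` a complete discretely valued field of
mixed characteristic `(0,p)`. Let `M` be the differential module over `K[[t]]₀` with basis
`e₁, e₂`, `D(e₁) = e₂`, `D(e₂) = -e₁ - t·e₂`, so on coordinates
`D(g,h) = (g' - h, g + h' - t·h)`. Then the horizontal sections of `M ⊗ K{t}` (coordinates
converging on the open unit disc) are exactly `K·(t·e₁ + e₂)`: `D(g,h) = 0` iff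
`(g,h) = (d·t, d)` for some `d ∈ K`. In particular the space of horizontal sections is
one-dimensional and consists of sections defined over `K[[t]]₀`. -/
theorem horizontal_sections_of_M (p : ℕ) (hp : p.Prime) (hp2 : p ≠ 2)
    (K : Type*) [NormedField K] [CompleteSpace K]
    (hK : ∀ q : ℚ, ‖(q : K)‖ = (padicNorm p q : ℝ))
    (hdisc : ∃ π : K, 0 < ‖π‖ ∧ ‖π‖ < 1 ∧ ∀ x : K, x ≠ 0 → ∃ n : ℤ, ‖x‖ = ‖π‖ ^ n) :
    let Conv : PowerSeries K → Prop := fun f => ∀ η : ℝ, 0 ≤ η → η < 1 →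
      Tendsto (fun i : ℕ => ‖PowerSeries.coeff (R := K) i f‖ * η ^ i) atTop (nhds 0)
    ∀ g h : PowerSeries K, Conv g → Conv h →
      ((PowerSeries.derivative K g - h = 0 ∧
        g + PowerSeries.derivative K h - PowerSeries.X * h = 0) ↔
      ∃ d : K, g = PowerSeries.C (R := K) d * PowerSeries.X ∧ h = PowerSeries.C (R := K) d) :=
  horizontal_sections_of_M_general p hp K hK
end

section
/- Let p ≠ 2 and K a complete discretely valued field of mixed characteristic (0,p). Let M∨ be the differential module over K[[t]]₀ with basis e₁∨, e₂∨ and D(e₁∨) = e₂∨, D(e₂∨) = -e₁∨ + t·e₂∨ (the dual of the module in the previous item, corresponding to the operator d²/dt² - t·d/dt). Then M∨ ⊗ K{t} has no nonzero horizontal sections. -/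
/-!
Eliminating `h = g'`, the system becomes `g'' + t g' + g = 0`, i.e. `(n + 2) aₙ₊₂ = -aₙ` for
the coefficients of `g`, so `n‼ aₙ = ± a_{n mod 2}` and `|aₙ| = |a_{n mod 2}| p ^ v_p(n‼)`.
As `p` is odd, `v_p((2pᵐ)‼) = v_p((pᵐ)!) = (pᵐ - 1)/(p - 1)` and
`v_p((pᵐ)‼) = v_p((pᵐ)!) - v_p(((pᵐ - 1)/2)!) ≥ (pᵐ - 1)/(2(p - 1))`. Hence along `n = 2pᵐ`
and `n = pᵐ` the terms `|aₙ| ω^(n/2)` stay above `|a_{n mod 2}| ω`, where `ω = p^(-1/(p-1))`;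
convergence at radius `ω^(1/2) < 1` forces `a₀ = a₁ = 0`, hence `g = 0`.
-/

open PowerSeries Filter
open scoped Nat Topology

namespace PowerSeries

variable {R : Type*} [CommRing R]

theorem coeff_add_two_of_add_derivative_add_X_mul_eq_zero [IsDomain R] [CharZero R]
    {g : R⟦X⟧} (hg : g + derivative R (derivative R g) + X * derivative R g = 0) (n : ℕ) :
    ((n : R) + 2) * coeff (n + 2) g = -coeff n g := by
  have hn := congrArg (coeff n) hg
  have key : ((n : R) + 1) * (((n : R) + 2) * coeff (n + 2) g + coeff n g) = 0 := by
    rcases n with _ | n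
    · simp only [map_add, coeff_zero_X_mul, coeff_derivative, map_zero] at hn
      push_cast at hn ⊢
      linear_combination hn
    · simp only [map_add, coeff_succ_X_mul, coeff_derivative, map_zero] at hn
      push_cast at hn ⊢
      linear_combination hn
  have := (mul_eq_zero.mp key).resolve_left (Nat.cast_add_one_ne_zero n)
  linear_combination this

end PowerSeries

theorem doubleFactorial_mul_eq_of_add_two_mul {R : Type*} [CommRing R] {a : ℕ → R}
    (ha : ∀ n : ℕ, ((n : R) + 2) * a (n + 2) = -a n) (n : ℕ) :
    (n‼ : R) * a n = (-1) ^ (n / 2) * a (n % 2) := by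
  induction n using Nat.twoStepInduction with
  | zero => simp
  | one => simp
  | more n ih _ =>
    rw [Nat.doubleFactorial_add_two, Nat.add_div_right _ two_pos, Nat.add_mod_right, pow_succ]
    push_cast
    linear_combination (n‼ : R) * ha n - ih

section Valuation

variable {p : ℕ} [hp : Fact p.Prime]

theorem sub_one_mul_padicValNat_factorial_pow (m : ℕ) :
    (p - 1) * padicValNat p (p ^ m)! = p ^ m - 1 := by
  have hdigits : p.digits (p ^ m) = List.replicate m 0 ++ [1] := by
    simpa [Nat.digits_of_lt p 1 one_ne_zero hp.out.one_lt] using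
      Nat.digits_base_pow_mul (k := m) hp.out.one_lt one_pos
  simp [sub_one_mul_padicValNat_factorial, hdigits]

theorem sub_one_mul_padicValNat_factorial_le (n : ℕ) :
    (p - 1) * padicValNat p n ! ≤ n := by
  rw [sub_one_mul_padicValNat_factorial]
  exact Nat.sub_le _ _

theorem padicValNat_two_pow (hp2 : p ≠ 2) (k : ℕ) : padicValNat p (2 ^ k) = 0 :=
  padicValNat.eq_zero_of_not_dvd fun hdvd =>
    hp2 ((Nat.prime_dvd_prime_iff_eq hp.out Nat.prime_two).mp (hp.out.dvd_of_dvd_pow hdvd))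

theorem padicValNat_doubleFactorial_two_mul (hp2 : p ≠ 2) (k : ℕ) :
    padicValNat p (2 * k)‼ = padicValNat p k ! := by
  rw [Nat.doubleFactorial_two_mul, padicValNat.mul (by positivity) (Nat.factorial_ne_zero k),
    padicValNat_two_pow hp2, zero_add]

theorem padicValNat_factorial_two_mul_add_one (hp2 : p ≠ 2) (k : ℕ) :
    padicValNat p (2 * k + 1)! = padicValNat p (2 * k + 1)‼ + padicValNat p k ! := by
  rw [Nat.factorial_eq_mul_doubleFactorial, ← padicValNat_doubleFactorial_two_mul hp2,
    padicValNat.mul (Nat.doubleFactorial_pos _).ne' (Nat.doubleFactorial_pos _).ne']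

theorem frequently_le_padicValNat_doubleFactorial (hp2 : p ≠ 2) {r : ℕ} (hr : r < 2) :
    ∃ᶠ n in atTop, n % 2 = r ∧ n ≤ 2 * ((p - 1) * padicValNat p n‼) + 2 := by
  refine frequently_atTop.mpr fun N => ?_
  have hN : N ≤ p ^ N := (Nat.lt_pow_self hp.out.one_lt).le
  have hpos : 0 < p ^ N := pow_pos hp.out.pos N
  have hv := sub_one_mul_padicValNat_factorial_pow (p := p) N
  interval_cases r
  · refine ⟨2 * p ^ N, by omega, by simp, ?_⟩
    rw [padicValNat_doubleFactorial_two_mul hp2]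
    omega
  · obtain ⟨k, hk⟩ := (hp.out.odd_of_ne_two hp2).pow (n := N)
    have hfac := padicValNat_factorial_two_mul_add_one hp2 k
    have hle := sub_one_mul_padicValNat_factorial_le (p := p) k
    refine ⟨p ^ N, hN, by omega, ?_⟩
    rw [hk] at hv ⊢
    rw [hfac, mul_add] at hv
    omega

end Valuation

noncomputable def padicOmega (p : ℕ) : ℝ := (p : ℝ)⁻¹ ^ ((p - 1 : ℕ) : ℝ)⁻¹

section Omega

variable {p : ℕ}

theorem padicOmega_pos (hp : 1 < p) : 0 < padicOmega p :=
  Real.rpow_pos_of_pos (inv_pos.mpr (by exact_mod_cast hp.trans' one_pos)) _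

theorem padicOmega_lt_one (hp : 1 < p) : padicOmega p < 1 :=
  Real.rpow_lt_one (by positivity) (inv_lt_one_of_one_lt₀ (by exact_mod_cast hp))
    (inv_pos.mpr (by exact_mod_cast Nat.sub_pos_of_lt hp))

theorem padicOmega_pow_sub_one (hp : 1 < p) : padicOmega p ^ (p - 1) = (p : ℝ)⁻¹ :=
  Real.rpow_inv_natCast_pow (by positivity) (Nat.sub_ne_zero_of_lt hp)

theorem sqrt_padicOmega_lt_one (hp : 1 < p) : √(padicOmega p) < 1 :=
  (Real.sqrt_lt' one_pos).mpr (by simpa using padicOmega_lt_one hp)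

end Omega

section NormedField

variable {K : Type*} [NormedField K] {p : ℕ}

theorem norm_natCast_eq_inv_pow_padicValNat (hK : ∀ q : ℚ, ‖(q : K)‖ = padicNorm p q)
    {n : ℕ} (hn : n ≠ 0) :
    ‖(n : K)‖ = (p : ℝ)⁻¹ ^ padicValNat p n := by
  have := hK n
  rw [Rat.cast_natCast, padicNorm.eq_zpow_of_nonzero (Nat.cast_ne_zero.mpr hn),
    padicValRat.of_nat] at this
  rw [this, Rat.cast_zpow, Rat.cast_natCast, zpow_neg, zpow_natCast, inv_pow]

theorem charZero_of_norm_ratCast_eq_padicNorm [hp : Fact p.Prime]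
    (hK : ∀ q : ℚ, ‖(q : K)‖ = padicNorm p q) : CharZero K :=
  charZero_of_inj_zero fun n hn => by
    by_contra h
    have := norm_natCast_eq_inv_pow_padicValNat hK h
    rw [hn, norm_zero] at this
    exact (pow_pos (inv_pos.mpr (by exact_mod_cast hp.out.pos)) _).ne this

theorem norm_doubleFactorial_mul_sqrt_padicOmega_sq_le [hp : Fact p.Prime]
    (hK : ∀ q : ℚ, ‖(q : K)‖ = padicNorm p q) {n : ℕ}
    (hn : n ≤ 2 * ((p - 1) * padicValNat p n‼) + 2) :
    ‖(n‼ : K)‖ * √(padicOmega p) ^ 2 ≤ √(padicOmega p) ^ n := by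
  have hp1 := hp.out.one_lt
  set η := √(padicOmega p)
  have hη : η ^ 2 = padicOmega p := Real.sq_sqrt (padicOmega_pos hp1).le
  have hnorm : ‖(n‼ : K)‖ = η ^ (2 * ((p - 1) * padicValNat p n‼)) := by
    rw [norm_natCast_eq_inv_pow_padicValNat hK (Nat.doubleFactorial_pos n).ne', pow_mul, pow_mul,
      hη, padicOmega_pow_sub_one hp1]
  rw [hnorm, ← pow_add]
  exact pow_le_pow_of_le_one (Real.sqrt_nonneg _)
    (sqrt_padicOmega_lt_one hp1).le hn

theorem eq_zero_of_doubleFactorial_mul_norm_eq [hp : Fact p.Prime]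
    (hK : ∀ q : ℚ, ‖(q : K)‖ = padicNorm p q) (hp2 : p ≠ 2) {a : ℕ → K}
    (ha : ∀ n, ‖(n‼ : K)‖ * ‖a n‖ = ‖a (n % 2)‖)
    (hlim : Tendsto (fun n => ‖a n‖ * √(padicOmega p) ^ n) atTop (𝓝 0)) {r : ℕ}
    (hr : r < 2) : a r = 0 := by
  have hfreq :
      ∃ᶠ n in atTop, ‖a r‖ * padicOmega p ≤ ‖a n‖ * √(padicOmega p) ^ n := by
    refine (frequently_le_padicValNat_doubleFactorial hp2 hr).mono fun n ⟨hnr, hn⟩ => ?_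
    calc ‖a r‖ * padicOmega p = ‖a n‖ * (‖(n‼ : K)‖ * √(padicOmega p) ^ 2) := by
          rw [Real.sq_sqrt (padicOmega_pos hp.out.one_lt).le, ← hnr, ← ha]; ring
      _ ≤ ‖a n‖ * √(padicOmega p) ^ n :=
          mul_le_mul_of_nonneg_left (norm_doubleFactorial_mul_sqrt_padicOmega_sq_le hK hn)
            (norm_nonneg _)
  have hle := ge_of_tendsto_of_frequently hlim hfreq
  exact norm_le_zero_iff.mp
    (nonpos_of_mul_nonpos_left hle (padicOmega_pos hp.out.one_lt))

end NormedField

theorem no_horizontal_sections_of_M_dual_general (p : ℕ) (hp : p.Prime) (hp2 : p ≠ 2)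
    (K : Type*) [NormedField K]
    (hK : ∀ q : ℚ, ‖(q : K)‖ = (padicNorm p q : ℝ)) :
    let Conv : PowerSeries K → Prop := fun f => ∀ η : ℝ, 0 ≤ η → η < 1 →
      Tendsto (fun i : ℕ => ‖PowerSeries.coeff (R := K) i f‖ * η ^ i) atTop (nhds 0)
    ∀ g h : PowerSeries K, Conv g → Conv h →
      (PowerSeries.derivative K g - h = 0 ∧
        g + PowerSeries.derivative K h + PowerSeries.X * h = 0) →
      g = 0 ∧ h = 0 := by
  intro Conv g h hg _ ⟨hgh, hode⟩
  have : Fact p.Prime := ⟨hp⟩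
  have := charZero_of_norm_ratCast_eq_padicNorm hK
  obtain rfl : h = derivative K g := (sub_eq_zero.mp hgh).symm
  have hdf := doubleFactorial_mul_eq_of_add_two_mul (a := fun n => coeff n g)
    (coeff_add_two_of_add_derivative_add_X_mul_eq_zero hode)
  have hlow : ∀ r < 2, coeff r g = 0 := fun r hr =>
    eq_zero_of_doubleFactorial_mul_norm_eq hK hp2 (fun n => by simpa using congrArg norm (hdf n))
      (hg _ (Real.sqrt_nonneg _) (sqrt_padicOmega_lt_one hp.one_lt)) hr
  have hg0 : g = 0 := ext fun n => by
    have := hdf n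
    rw [hlow _ (Nat.mod_lt _ two_pos), mul_zero, mul_eq_zero] at this
    exact this.resolve_left (Nat.cast_ne_zero.mpr (Nat.doubleFactorial_pos n).ne')
  exact ⟨hg0, by rw [hg0, map_zero]⟩

/-- Let `p ≠ 2` be prime and `K` a complete discretely valued field of
mixed characteristic `(0,p)`. Let `M∨` be the differential module over `K[[t]]₀` with basis
`e₁∨, e₂∨`, `D(e₁∨) = e₂∨`, `D(e₂∨) = -e₁∨ + t·e₂∨` (corresponding to `d²/dt² - t·d/dt`),
so on coordinates `D(g,h) = (g' - h, g + h' + t·h)`. Then `M∨ ⊗ K{t}` has no nonzero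
horizontal sections: if `g, h` converge on the open unit disc and `D(g,h) = 0`,
then `g = h = 0`. -/
theorem no_horizontal_sections_of_M_dual (p : ℕ) (hp : p.Prime) (hp2 : p ≠ 2)
    (K : Type*) [NormedField K] [CompleteSpace K]
    (hK : ∀ q : ℚ, ‖(q : K)‖ = (padicNorm p q : ℝ))
    (hdisc : ∃ π : K, 0 < ‖π‖ ∧ ‖π‖ < 1 ∧ ∀ x : K, x ≠ 0 → ∃ n : ℤ, ‖x‖ = ‖π‖ ^ n) :
    let Conv : PowerSeries K → Prop := fun f => ∀ η : ℝ, 0 ≤ η → η < 1 →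
      Tendsto (fun i : ℕ => ‖PowerSeries.coeff (R := K) i f‖ * η ^ i) atTop (nhds 0)
    ∀ g h : PowerSeries K, Conv g → Conv h →
      (PowerSeries.derivative K g - h = 0 ∧
        g + PowerSeries.derivative K h + PowerSeries.X * h = 0) →
      g = 0 ∧ h = 0 :=
  no_horizontal_sections_of_M_dual_general p hp hp2 K hK
end
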